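/- If (G, D, {D₁,…,Dₙ}) is a minimal decomposition of a closed triangulated surface T, then for every edge e in the boundary of G, the unique vertex in the link of e within G also lies in the boundary of G. -/

import Mathlib

namespace Tri

/-- A (pure 2-dimensional) simplicial complex, given by its set of triangles
(each triangle is a 3-element finset of vertex labels). -/
abbrev Complex := Finset (Finset ℕ)

/-- The vertices of a complex. -/
def vertices (K : Complex) : Finset ℕ := K.biUnion id

/-- The edges of a complex: 2-element subsets of triangles. -/
def edges (K : Complex) : Finset (Finset ℕ) := K.biUnion fun t => t.powersetCard 2

/-- The valence of a vertex: the number of triangles containing it. -/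
def valence (K : Complex) (v : ℕ) : ℕ := (K.filter (fun t => v ∈ t)).card

/-- The maximal vertex-valence of a complex. -/
def mv (K : Complex) : ℕ := (vertices K).sup (valence K)

/-- Euler characteristic V - E + T. -/
def eulerChar (K : Complex) : ℤ :=
  ((vertices K).card : ℤ) - (edges K).card + K.card

/-- Two triangles of `K` both containing `v` and sharing an edge. -/
def adjAt (K : Complex) (v : ℕ) (t₁ t₂ : Finset ℕ) : Prop :=
  t₁ ∈ K ∧ t₂ ∈ K ∧ v ∈ t₁ ∧ v ∈ t₂ ∧ (t₁ ∩ t₂).card = 2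

/-- Two triangles of `K` sharing an edge. -/
def adj (K : Complex) (t₁ t₂ : Finset ℕ) : Prop :=
  t₁ ∈ K ∧ t₂ ∈ K ∧ (t₁ ∩ t₂).card = 2

/-- A triangulation of a connected compact surface, possibly with boundary:
every triangle has 3 vertices, every edge lies in at most two triangles,
the triangles around every vertex are connected via edges through that vertex
(so every vertex link is a path or a circle), and the complex is connected. -/
structure IsSurface (K : Complex) : Prop where
  nonempty : K.Nonempty
  card3 : ∀ t ∈ K, t.card = 3
  edge_le : ∀ e ∈ edges K, (K.filter (fun t => e ⊆ t)).card ≤ 2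
  link_conn : ∀ v, ∀ t₁ ∈ K, ∀ t₂ ∈ K, v ∈ t₁ → v ∈ t₂ →
    Relation.ReflTransGen (adjAt K v) t₁ t₂
  conn : ∀ t₁ ∈ K, ∀ t₂ ∈ K, Relation.ReflTransGen (adj K) t₁ t₂

/-- A triangulation of a closed (connected compact) surface: every edge lies
in exactly two triangles. -/
def IsClosedSurface (K : Complex) : Prop :=
  IsSurface K ∧ ∀ e ∈ edges K, (K.filter (fun t => e ⊆ t)).card = 2

/-- Boundary edges: edges lying in exactly one triangle. -/
def bdryEdges (K : Complex) : Finset (Finset ℕ) :=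
  (edges K).filter (fun e => (K.filter (fun t => e ⊆ t)).card = 1)

/-- Boundary vertices. -/
def bdryVertices (K : Complex) : Finset ℕ := (bdryEdges K).biUnion id

/-- Interior vertices. -/
def intVertices (K : Complex) : Finset ℕ := vertices K \ bdryVertices K

/-- A triangulated disc: a connected compact surface with nonempty boundary and
Euler characteristic 1. -/
def IsDisc (K : Complex) : Prop :=
  IsSurface K ∧ eulerChar K = 1 ∧ (bdryEdges K).Nonempty

/-- Two edges sharing a vertex. -/
def edgeAdj (E : Complex) (e₁ e₂ : Finset ℕ) : Prop :=
  e₁ ∈ E ∧ e₂ ∈ E ∧ (e₁ ∩ e₂).Nonempty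

/-- A set of edges forming a triangulated circle. -/
def IsCircle (E : Complex) : Prop :=
  E.Nonempty ∧ (∀ e ∈ E, e.card = 2) ∧
  (∀ v ∈ E.biUnion id, (E.filter (fun e => v ∈ e)).card = 2) ∧
  ∀ e₁ ∈ E, ∀ e₂ ∈ E, Relation.ReflTransGen (edgeAdj E) e₁ e₂

/-- Simplicial isomorphism (re-labeling). -/
def Iso (K₁ K₂ : Complex) : Prop :=
  ∃ f : ℕ → ℕ, Set.InjOn f (vertices K₁) ∧ K₁.image (Finset.image f) = K₂

/-- The boundary of the tetrahedron. -/
def tetra : Complex := {{1,2,3},{1,2,4},{1,3,4},{2,3,4}}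

/-- The boundary of the octahedron. -/
def octa : Complex := {{1,2,3},{1,2,4},{1,3,5},{1,4,5},{2,3,6},{2,4,6},{3,5,6},{4,5,6}}

/-- The vertices of the link of a vertex. -/
def linkV (K : Complex) (v : ℕ) : Finset ℕ :=
  ((K.filter (fun t => v ∈ t)).biUnion id).erase v

/-- The result of the inverse T-move removing the vertex `v`. -/
def invT (K : Complex) (v : ℕ) : Complex :=
  insert (linkV K v) (K.filter (fun t => v ∉ t))

/-- `K'` is obtained from `K` by an inverse T-move: a 3-valent vertex whose
link does not bound a triangle is removed. -/
def InvTStep (K K' : Complex) : Prop :=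
  ∃ v, valence K v = 3 ∧ linkV K v ∉ K ∧ K' = invT K v

/-- A root: a closed triangulated surface admitting no inverse T-move. -/
def IsRoot (K : Complex) : Prop := IsClosedSurface K ∧ ∀ K', ¬ InvTStep K K'

/-- `R` is a root of `K`: obtained from `K` by inverse T-moves, with no
further inverse T-move applicable. -/
def IsRootOf (R K : Complex) : Prop :=
  Relation.ReflTransGen InvTStep K R ∧ ∀ R', ¬ InvTStep R R'

/-- The directed edges of an ordered triangle. -/
def dedges (p : ℕ × ℕ × ℕ) : Finset (ℕ × ℕ) := {(p.1, p.2.1), (p.2.1, p.2.2), (p.2.2, p.1)}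

/-- Orientability: a coherent choice of cyclic orders on the triangles,
i.e. no directed edge is shared by two distinct triangles. -/
def Orientable (K : Complex) : Prop :=
  ∃ o : Finset ℕ → ℕ × ℕ × ℕ,
    (∀ t ∈ K, ({(o t).1, (o t).2.1, (o t).2.2} : Finset ℕ) = t) ∧
    ∀ t₁ ∈ K, ∀ t₂ ∈ K, t₁ ≠ t₂ → ∀ p ∈ dedges (o t₁), p ∉ dedges (o t₂)

/-- Two closed triangulated surfaces triangulate the same surface iff they
have the same Euler characteristic and the same orientability. -/
def SameSurface (K₁ K₂ : Complex) : Prop :=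
  eulerChar K₁ = eulerChar K₂ ∧ (Orientable K₁ ↔ Orientable K₂)

/-- The intersection of two subcomplexes is a triangulated circle or empty. -/
def CircleInter (A B : Complex) : Prop :=
  (IsCircle (edges A ∩ edges B) ∨ edges A ∩ edges B = ∅) ∧
  vertices A ∩ vertices B = (edges A ∩ edges B).biUnion id

/-- A decomposition `(G, D, Ds)` of a closed triangulated surface `K`. -/
structure IsDecomp (K G D : Complex) (Ds : Finset Complex) : Prop where
  closed : IsClosedSurface K
  subG : G ⊆ K
  subD : D ⊆ K
  subDs : ∀ Di ∈ Ds, Di ⊆ K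
  surfG : IsSurface G
  discD : IsDisc D
  discDs : ∀ Di ∈ Ds, IsDisc Di
  maxv : ∃ v ∈ intVertices D, valence K v = mv K
  cover : G ∪ D ∪ Ds.sup id = K
  disjGD : Disjoint G D
  disjGDs : ∀ Di ∈ Ds, Disjoint G Di
  disjDDs : ∀ Di ∈ Ds, Disjoint D Di
  disjDsDs : ∀ Di ∈ Ds, ∀ Dj ∈ Ds, Di ≠ Dj → Disjoint Di Dj
  interGD : CircleInter G D
  interGDs : ∀ Di ∈ Ds, CircleInter G Di
  interDDs : ∀ Di ∈ Ds, CircleInter D Di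
  interDsDs : ∀ Di ∈ Ds, ∀ Dj ∈ Ds, Di ≠ Dj → CircleInter Di Dj

/-- A minimal decomposition: the genus-surface has the fewest triangles. -/
def IsMinDecomp (K G D : Complex) (Ds : Finset Complex) : Prop :=
  IsDecomp K G D Ds ∧ ∀ G' D' Ds', IsDecomp K G' D' Ds' → G.card ≤ G'.card

/-!
Suppose the third vertex `w` of the triangle `t = {a, b, w}` of `G` on the boundary edge `{a, b}`
were interior to `G`. The other triangle `t'` on `{a, b}` lies in one of the discs `C`, and `w` is
not a vertex of `C`, since every vertex shared by `G` and `C` lies on a shared edge, which is a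
boundary edge of `G`. Moving `t` from `G` to `C` keeps all conditions of a decomposition:
`G - t` is still a surface because the link of `w` is a circle, which stays connected when one
arc is removed; `C + t` is a disc, glued along one edge with one new vertex, so its Euler
characteristic is unchanged; and the circle `G ∩ C` only has its edge `{a, b}` replaced by the
path `a w b`. The new genus-surface is smaller, contradicting minimality.
-/

open Finset Relation

lemma mem_vertices {K : Complex} {v : ℕ} : v ∈ vertices K ↔ ∃ t ∈ K, v ∈ t := by
  simp [vertices]

lemma mem_edges {K : Complex} {f : Finset ℕ} :
    f ∈ edges K ↔ ∃ t ∈ K, f ⊆ t ∧ #f = 2 := by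
  simp [edges, mem_powersetCard]

lemma mem_bdryVertices {K : Complex} {v : ℕ} :
    v ∈ bdryVertices K ↔ ∃ f ∈ bdryEdges K, v ∈ f := by
  simp [bdryVertices]

lemma mem_vertices_of_mem_edges {K : Complex} {f : Finset ℕ} {v : ℕ} (hf : f ∈ edges K)
    (hv : v ∈ f) : v ∈ vertices K :=
  let ⟨t, ht, hft, _⟩ := mem_edges.1 hf
  mem_vertices.2 ⟨t, ht, hft hv⟩

lemma vertices_insert (t : Finset ℕ) (K : Complex) :
    vertices (insert t K) = t ∪ vertices K := by
  simp [vertices]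

lemma edges_insert (t : Finset ℕ) (K : Complex) :
    edges (insert t K) = t.powersetCard 2 ∪ edges K := by
  simp [edges]

lemma vertices_mono {A B : Complex} (h : A ⊆ B) : vertices A ⊆ vertices B :=
  biUnion_subset_biUnion_of_subset_left _ h

lemma edges_mono {A B : Complex} (h : A ⊆ B) : edges A ⊆ edges B :=
  biUnion_subset_biUnion_of_subset_left _ h

lemma circleInter_congr {A B A' B' : Complex} (h : CircleInter A B)
    (he : edges A' ∩ edges B' = edges A ∩ edges B)
    (hv : vertices A' ∩ vertices B' = vertices A ∩ vertices B) : CircleInter A' B' := by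
  rwa [CircleInter, he, hv]

lemma circleInter_comm {A B : Complex} : CircleInter A B ↔ CircleInter B A := by
  rw [CircleInter, CircleInter, inter_comm (edges A), inter_comm (vertices A)]

instance (K : Complex) (v : ℕ) : Std.Symm (adjAt K v) :=
  ⟨fun _ _ h => ⟨h.2.1, h.1, h.2.2.2.1, h.2.2.1, by rw [inter_comm]; exact h.2.2.2.2⟩⟩

instance (K : Complex) : Std.Symm (adj K) :=
  ⟨fun _ _ h => ⟨h.2.1, h.1, by rw [inter_comm]; exact h.2.2⟩⟩

instance (E : Complex) : Std.Symm (edgeAdj E) :=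
  ⟨fun _ _ h => ⟨h.2.1, h.1, by rw [inter_comm]; exact h.2.2⟩⟩

lemma adj_of_adjAt {K : Complex} {v : ℕ} {x y : Finset ℕ} (h : adjAt K v x y) : adj K x y :=
  ⟨h.1, h.2.1, h.2.2.2.2⟩

lemma adjAt_mono {A B : Complex} (h : A ⊆ B) {v : ℕ} {x y : Finset ℕ} (hxy : adjAt A v x y) :
    adjAt B v x y :=
  ⟨h hxy.1, h hxy.2.1, hxy.2.2⟩

lemma adj_mono {A B : Complex} (h : A ⊆ B) {x y : Finset ℕ} (hxy : adj A x y) : adj B x y :=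
  ⟨h hxy.1, h hxy.2.1, hxy.2.2⟩

lemma adjAt_erase {K : Complex} {v : ℕ} {x y t : Finset ℕ} (hxy : adjAt K v x y) (hx : x ≠ t)
    (hy : y ≠ t) : adjAt (K.erase t) v x y :=
  ⟨mem_erase.2 ⟨hx, hxy.1⟩, mem_erase.2 ⟨hy, hxy.2.1⟩, hxy.2.2⟩

lemma adj_erase {K : Complex} {x y t : Finset ℕ} (hxy : adj K x y) (hx : x ≠ t) (hy : y ≠ t) :
    adj (K.erase t) x y :=
  ⟨mem_erase.2 ⟨hx, hxy.1⟩, mem_erase.2 ⟨hy, hxy.2.1⟩, hxy.2.2⟩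

lemma card_inter_le_two {x y : Finset ℕ} (hx : #x = 3) (hy : #y = 3) (hxy : x ≠ y) :
    #(x ∩ y) ≤ 2 := by
  by_contra! h
  have hxy' : x ∩ y = x := eq_of_subset_of_card_le inter_subset_left (by omega)
  exact hxy (eq_of_subset_of_card_le (hxy' ▸ inter_subset_right) (by omega))

lemma card_inter_eq_two {x y f : Finset ℕ} (hx : #x = 3) (hy : #y = 3) (hxy : x ≠ y)
    (hfx : f ⊆ x) (hfy : f ⊆ y) (hf : #f = 2) : #(x ∩ y) = 2 :=
  le_antisymm (card_inter_le_two hx hy hxy) (hf ▸ card_le_card (subset_inter hfx hfy))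

lemma eq_triple_of_subset {t : Finset ℕ} {a b w : ℕ} (ht : #t = 3) (hab : a ≠ b)
    (hwa : w ≠ a) (hwb : w ≠ b) (h : {a, b, w} ⊆ t) : t = {a, b, w} :=
  (eq_of_subset_of_card_le h (by rw [ht, card_insert_of_notMem (by simp [hab, hwa.symm]),
    card_pair hwb.symm])).symm

lemma pair_subset_triple {a b w : ℕ} {f : Finset ℕ} (hab : a ≠ b) (hwa : w ≠ a) (hwb : w ≠ b)
    (hf : f ⊆ {a, b, w}) (hc : #f = 2) : f = {a, b} ∨ f = {a, w} ∨ f = {b, w} := by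
  obtain ⟨x, y, hxy, rfl⟩ := card_eq_two.1 hc
  have hx : x = a ∨ x = b ∨ x = w := by simpa using hf (mem_insert_self x {y})
  have hy : y = a ∨ y = b ∨ y = w := by simpa using hf (by simp : y ∈ ({x, y} : Finset ℕ))
  rcases hx with rfl | rfl | rfl <;> rcases hy with rfl | rfl | rfl <;>
    simp_all [pair_comm]

lemma exists_eq_triple_of_mem {x : Finset ℕ} {w : ℕ} (hx : #x = 3) (hw : w ∈ x) :
    ∃ p q, p ≠ q ∧ w ≠ p ∧ w ≠ q ∧ x = {p, q, w} := by
  obtain ⟨p, q, hpq, hpqx⟩ := card_eq_two.1 (by rw [card_erase_of_mem hw, hx] : #(x.erase w) = 2)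
  have hp : p ∈ x.erase w := by simp [hpqx]
  have hq : q ∈ x.erase w := by simp [hpqx]
  refine ⟨p, q, hpq, (ne_of_mem_erase hp).symm, (ne_of_mem_erase hq).symm,
    eq_triple_of_subset hx hpq (ne_of_mem_erase hp).symm (ne_of_mem_erase hq).symm ?_⟩
  simp [insert_subset_iff, mem_of_mem_erase hp, mem_of_mem_erase hq, hw]

lemma powersetCard_two_triple {a b w : ℕ} (hab : a ≠ b) (hwa : w ≠ a) (hwb : w ≠ b) :
    ({a, b, w} : Finset ℕ).powersetCard 2 = {{a, b}, {a, w}, {b, w}} := by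
  ext f
  rw [mem_powersetCard]
  constructor
  · rintro ⟨hf, hc⟩
    simpa using pair_subset_triple hab hwa hwb hf hc
  · simp only [mem_insert, mem_singleton]
    rintro (rfl | rfl | rfl)
    exacts [⟨by simp [insert_subset_iff], card_pair hab⟩,
      ⟨by simp [insert_subset_iff], card_pair hwa.symm⟩,
      ⟨by simp, card_pair hwb.symm⟩]

section Relations

variable {α : Type*}

lemma exists_other_of_card_filter_eq_two [DecidableEq α] {A : Finset α}
    {p : α → Prop} [DecidablePred p] (h2 : #(A.filter p) = 2) {x : α} (hx : x ∈ A)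
    (hpx : p x) : ∃ y ∈ A, p y ∧ y ≠ x ∧ ∀ z ∈ A, p z → z = x ∨ z = y := by
  obtain ⟨u, v, huv, hset⟩ := card_eq_two.1 h2
  have key : ∀ s, s ∈ A ∧ p s ↔ s = u ∨ s = v := by
    intro s
    rw [← mem_filter, hset]
    simp
  rcases (key x).1 ⟨hx, hpx⟩ with rfl | rfl
  · exact ⟨v, ((key v).2 (.inr rfl)).1, ((key v).2 (.inr rfl)).2, huv.symm,
      fun s hs hps => (key s).1 ⟨hs, hps⟩⟩
  · exact ⟨u, ((key u).2 (.inl rfl)).1, ((key u).2 (.inl rfl)).2, huv,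
      fun s hs hps => ((key s).1 ⟨hs, hps⟩).symm⟩

lemma even_card_of_involution [DecidableEq α] (s : Finset α) (f : α → α)
    (hf : ∀ x ∈ s, f x ∈ s ∧ f x ≠ x ∧ f (f x) = x) : Even #s := by
  induction s using Finset.strongInduction with
  | H s ih =>
    rcases s.eq_empty_or_nonempty with rfl | ⟨x, hx⟩
    · simp
    obtain ⟨hfx, hfxx, hffx⟩ := hf x hx
    have hcard : #s = #((s.erase x).erase (f x)) + 2 := by
      rw [← card_erase_add_one hx, ← card_erase_add_one (mem_erase.2 ⟨hfxx, hfx⟩)]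
    rw [hcard]
    refine (ih _ ((erase_subset _ _).trans_ssubset (erase_ssubset hx)) fun y hy => ?_).add even_two
    simp only [mem_erase] at hy ⊢
    obtain ⟨hyfx, hyx, hys⟩ := hy
    obtain ⟨h1, h2, h3⟩ := hf y hys
    exact ⟨⟨fun h => hyx (by rw [← h3, h, hffx]), fun h => hyfx (by rw [← h3, h]), h1⟩, h2, h3⟩

lemma reflTransGen_of_bypass {R R' : α → α → Prop} (t : α)
    (hRR' : ∀ x y, R x y → x ≠ t → y ≠ t → R' x y)
    (hnb : ∀ x y, R x t → R t y → x ≠ t → y ≠ t → ReflTransGen R' x y)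
    {a b : α} (hab : ReflTransGen R a b) (ha : a ≠ t) (hb : b ≠ t) :
    ReflTransGen R' a b := by
  have key : ∀ x, ReflTransGen R a x →
      (x = t → ∀ y, R t y → y ≠ t → ReflTransGen R' a y) ∧
      (x ≠ t → ReflTransGen R' a x) := by
    intro x hx
    induction hx with
    | refl => exact ⟨fun h => absurd h ha, fun _ => .refl⟩
    | @tail c d _ hcd ih =>
      by_cases hct : c = t
      · subst hct
        exact ⟨fun _ y hy hyt => ih.1 rfl y hy hyt, fun hdt => ih.1 rfl d hcd hdt⟩
      · refine ⟨fun hdt y hy hyt => ?_, fun hdt => (ih.2 hct).tail (hRR' c d hcd hct hdt)⟩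
        subst hdt
        exact (ih.2 hct).trans (hnb c y hcd hy hct hyt)
  exact (key b hab).2 hb

lemma card_filter_product_eq_mul {S F : Finset α} {R : α → α → Prop} [DecidableRel R] {k : ℕ}
    (hdeg : ∀ x ∈ S, #(F.filter (R x)) = k) : #((S ×ˢ F).filter (fun p => R p.1 p.2)) = k * #S := by
  rw [card_filter, sum_product, mul_comm, ← smul_eq_mul, ← sum_const]
  exact sum_congr rfl fun x hx => by rw [← card_filter, hdeg x hx]

open Classical in
/-- Otherwise the component of `sa` in the graph without `t` would have exactly one vertex of
odd degree, namely `sa`. -/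
lemma reflTransGen_avoid_of_two_regular [DecidableEq α] (F : Finset α) (R : α → α → Prop)
    [Std.Symm R] (hsupp : ∀ x y, R x y → x ∈ F ∧ y ∈ F ∧ x ≠ y)
    (hdeg : ∀ x ∈ F, #(F.filter (R x)) = 2)
    {t sa sb : α} (ha : R t sa) (hb : R t sb) (hab : sa ≠ sb) :
    ReflTransGen (fun x y => R x y ∧ x ≠ t ∧ y ≠ t) sa sb := by
  by_contra hcon
  set R' : α → α → Prop := fun x y => R x y ∧ x ≠ t ∧ y ≠ t
  obtain ⟨htF, hsaF, htsa⟩ := hsupp t sa ha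
  set S := F.filter (fun x => x ≠ t ∧ ReflTransGen R' sa x)
  have hsaS : sa ∈ S := mem_filter.2 ⟨hsaF, htsa.symm, .refl⟩
  have hnbt : ∀ x ∈ F, R t x → x = sa ∨ x = sb := by
    obtain ⟨y, -, -, -, hnb⟩ := exists_other_of_card_filter_eq_two (hdeg t htF) hsaF ha
    rcases hnb sb (hsupp t sb hb).2.1 hb with h | rfl
    · exact absurd h.symm hab
    · exact hnb
  set P := (S ×ˢ F).filter (fun p => R p.1 p.2)
  have hP : #P = 2 * #S := card_filter_product_eq_mul fun x hx => hdeg x (mem_filter.1 hx).1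
  have hPt : P.filter (fun p => p.2 = t) = {(sa, t)} := by
    ext ⟨x, y⟩
    simp only [P, mem_filter, mem_product, mem_singleton, Prod.mk.injEq]
    constructor
    · rintro ⟨⟨⟨hxS, -⟩, hxy⟩, rfl⟩
      refine ⟨(hnbt x (mem_filter.1 hxS).1 (symm hxy)).resolve_right ?_, rfl⟩
      rintro rfl
      exact hcon (mem_filter.1 hxS).2.2
    · rintro ⟨rfl, rfl⟩
      exact ⟨⟨⟨hsaS, htF⟩, symm ha⟩, rfl⟩
  have hPne : Even #(P.filter (fun p => p.2 ≠ t)) := by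
    refine even_card_of_involution _ Prod.swap fun ⟨x, y⟩ hp => ?_
    simp only [P, S, mem_filter, mem_product, Prod.swap_prod_mk] at hp ⊢
    obtain ⟨⟨⟨⟨hxF, hxt, hpath⟩, hyF⟩, hxy⟩, hyt⟩ := hp
    exact ⟨⟨⟨⟨⟨hyF, hyt, hpath.tail ⟨hxy, hxt, hyt⟩⟩, hxF⟩, symm hxy⟩, hxt⟩,
      fun h => (hsupp x y hxy).2.2 (Prod.ext_iff.1 h).2, trivial⟩
  have hsplit := card_filter_add_card_filter_not (s := P) (fun p => p.2 = t)
  rw [hPt, card_singleton, hP] at hsplit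
  obtain ⟨k, hk⟩ := hPne
  simp only [← ne_eq] at hsplit
  omega

end Relations

section Surfaces

variable {K G B : Complex}

lemma eq_of_mem_bdryEdges {e s t : Finset ℕ} (he : e ∈ bdryEdges G) (hs : s ∈ G) (ht : t ∈ G)
    (hes : e ⊆ s) (het : e ⊆ t) : s = t :=
  card_le_one.1 (mem_filter.1 he).2.le s (mem_filter.2 ⟨hs, hes⟩) t (mem_filter.2 ⟨ht, het⟩)

lemma IsClosedSurface.exists_other_triangle (hK : IsClosedSurface K) {f t₁ : Finset ℕ}
    (ht₁ : t₁ ∈ K) (hf : f ⊆ t₁) (hfc : #f = 2) :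
    ∃ t₂ ∈ K, f ⊆ t₂ ∧ t₂ ≠ t₁ ∧ ∀ s ∈ K, f ⊆ s → s = t₁ ∨ s = t₂ :=
  exists_other_of_card_filter_eq_two (hK.2 f (mem_edges.2 ⟨t₁, ht₁, hf, hfc⟩)) ht₁ hf

lemma IsSurface.card_filter_eq_two (hG : IsSurface G) {f : Finset ℕ} (hf : f ∈ edges G)
    (hfb : f ∉ bdryEdges G) : #(G.filter (f ⊆ ·)) = 2 := by
  obtain ⟨s, hs, hfs, -⟩ := mem_edges.1 hf
  have h1 : 0 < #(G.filter (f ⊆ ·)) := card_pos.2 ⟨s, mem_filter.2 ⟨hs, hfs⟩⟩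
  have h2 := hG.edge_le f hf
  have h3 : #(G.filter (f ⊆ ·)) ≠ 1 := fun h => hfb (mem_filter.2 ⟨hf, h⟩)
  omega

lemma IsSurface.card_filter_eq_two_of_mem (hG : IsSurface G) {f : Finset ℕ} {w : ℕ}
    (hw : w ∉ bdryVertices G) (hf : f ∈ edges G) (hwf : w ∈ f) : #(G.filter (f ⊆ ·)) = 2 :=
  hG.card_filter_eq_two hf fun hfb => hw (mem_bdryVertices.2 ⟨f, hfb, hwf⟩)

lemma mem_bdryEdges_of_mem_inter (hK : IsClosedSurface K) (hGK : G ⊆ K) (hBK : B ⊆ K)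
    (hGB : Disjoint G B) {f : Finset ℕ} (hf : f ∈ edges G ∩ edges B) : f ∈ bdryEdges G := by
  obtain ⟨hfG, hfB⟩ := mem_inter.1 hf
  obtain ⟨s, hsG, hfs, hfc⟩ := mem_edges.1 hfG
  obtain ⟨s', hs'B, hfs', -⟩ := mem_edges.1 hfB
  obtain ⟨t₂, -, -, -, huniq⟩ := hK.exists_other_triangle (hGK hsG) hfs hfc
  have hs' : s' = t₂ := (huniq s' (hBK hs'B) hfs').resolve_left fun h =>
    disjoint_left.1 hGB hsG (h ▸ hs'B)
  have hG_eq : ∀ u ∈ G.filter (f ⊆ ·), u = s := fun u hu =>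
    (huniq u (hGK (mem_filter.1 hu).1) (mem_filter.1 hu).2).resolve_right fun h =>
      disjoint_left.1 hGB (mem_filter.1 hu).1 (h ▸ hs' ▸ hs'B)
  refine mem_filter.2 ⟨hfG, le_antisymm (card_le_one.2 fun u hu v hv => ?_)
    (card_pos.2 ⟨s, mem_filter.2 ⟨hsG, hfs⟩⟩)⟩
  rw [hG_eq u hu, hG_eq v hv]

lemma notMem_vertices_of_notMem_bdryVertices (hK : IsClosedSurface K) (hGK : G ⊆ K)
    (hBK : B ⊆ K) (hGB : Disjoint G B) (hint : CircleInter G B) {w : ℕ}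
    (hwG : w ∈ vertices G) (hw : w ∉ bdryVertices G) : w ∉ vertices B := by
  intro hwB
  have hw' : w ∈ vertices G ∩ vertices B := mem_inter.2 ⟨hwG, hwB⟩
  rw [hint.2, mem_biUnion] at hw'
  obtain ⟨f, hf, hwf⟩ := hw'
  exact hw (mem_bdryVertices.2 ⟨f, mem_bdryEdges_of_mem_inter hK hGK hBK hGB hf, hwf⟩)

lemma adjAt_triple_iff (hG : ∀ s ∈ G, #s = 3) {p q w : ℕ} (hpq : p ≠ q) (hwp : w ≠ p)
    (hwq : w ≠ q) (hx : {p, q, w} ∈ G) {y : Finset ℕ} :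
    adjAt G w {p, q, w} y ↔ y ∈ G ∧ y ≠ {p, q, w} ∧ ({p, w} ⊆ y ∨ {q, w} ⊆ y) := by
  constructor
  · rintro ⟨-, hyG, -, hwy, hcard⟩
    have hyx : y ≠ {p, q, w} := by
      rintro rfl
      rw [inter_self, hG _ hx] at hcard
      omega
    refine ⟨hyG, hyx, ?_⟩
    have hw : w ∈ {p, q, w} ∩ y := mem_inter.2 ⟨by simp, hwy⟩
    rcases pair_subset_triple hpq hwp hwq inter_subset_left hcard with h | h | h
    · rw [h] at hw
      simp [hwp, hwq] at hw
    · exact .inl (h ▸ inter_subset_right)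
    · exact .inr (h ▸ inter_subset_right)
  · rintro ⟨hyG, hyx, hy⟩
    refine ⟨hx, hyG, by simp, ?_, ?_⟩
    · rcases hy with h | h <;> exact h (by simp)
    · rcases hy with h | h
      · exact card_inter_eq_two (hG _ hx) (hG y hyG) hyx.symm (by simp) h
          (card_pair hwp.symm)
      · exact card_inter_eq_two (hG _ hx) (hG y hyG) hyx.symm (by simp) h
          (card_pair hwq.symm)

open Classical in
lemma IsSurface.card_adjAt_eq_two (hG : IsSurface G) {w : ℕ} (hw : w ∉ bdryVertices G)
    {x : Finset ℕ} (hx : x ∈ G) (hwx : w ∈ x) :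
    #((G.filter (w ∈ ·)).filter (adjAt G w x)) = 2 := by
  obtain ⟨p, q, hpq, hwp, hwq, rfl⟩ := exists_eq_triple_of_mem (hG.card3 x hx) hwx
  have hother : ∀ r ∈ ({p, q} : Finset ℕ), ∃ s ∈ G, {r, w} ⊆ s ∧ s ≠ {p, q, w} ∧
      ∀ u ∈ G, {r, w} ⊆ u → u = {p, q, w} ∨ u = s := by
    intro r hr
    have hrw : r ≠ w := by rintro rfl; simp only [mem_insert, mem_singleton] at hr; tauto
    have hsub : {r, w} ⊆ ({p, q, w} : Finset ℕ) := by
      simp only [mem_insert, mem_singleton] at hr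
      rcases hr with rfl | rfl <;> simp
    have hf : {r, w} ∈ edges G := mem_edges.2 ⟨_, hx, hsub, card_pair hrw⟩
    exact exists_other_of_card_filter_eq_two (hG.card_filter_eq_two_of_mem hw hf (by simp)) hx
      hsub
  obtain ⟨sp, hspG, hsp, hspx, hspu⟩ := hother p (by simp)
  obtain ⟨sq, hsqG, hsq, hsqx, hsqu⟩ := hother q (by simp)
  have hne : sp ≠ sq := by
    rintro rfl
    refine hspx (eq_triple_of_subset (hG.card3 _ hspG) hpq hwp hwq ?_)
    simp only [insert_subset_iff, singleton_subset_iff] at hsp hsq ⊢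
    exact ⟨hsp.1, hsq.1, hsp.2⟩
  have hset : (G.filter (w ∈ ·)).filter (adjAt G w {p, q, w}) = {sp, sq} := by
    ext y
    simp only [mem_filter, mem_insert, mem_singleton, adjAt_triple_iff hG.card3 hpq hwp hwq hx]
    constructor
    · rintro ⟨-, hyG, hyx, hpy | hqy⟩
      exacts [.inl ((hspu y hyG hpy).resolve_left hyx), .inr ((hsqu y hyG hqy).resolve_left hyx)]
    · rintro (rfl | rfl)
      exacts [⟨⟨hspG, hsp (by simp)⟩, hspG, hspx, .inl hsp⟩,
        ⟨⟨hsqG, hsq (by simp)⟩, hsqG, hsqx, .inr hsq⟩]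
  rw [hset, card_pair hne]

open Classical in
lemma IsSurface.reflTransGen_adjAt_erase (hG : IsSurface G) {w : ℕ} (hw : w ∉ bdryVertices G)
    {t sa sb : Finset ℕ} (ha : adjAt G w t sa) (hb : adjAt G w t sb) (hab : sa ≠ sb) :
    ReflTransGen (adjAt (G.erase t) w) sa sb := by
  refine ReflTransGen.mono (fun x y h => ?_) _ _ <|
    reflTransGen_avoid_of_two_regular (G.filter (w ∈ ·)) (adjAt G w) (fun x y h => ?_)
      (fun x hx => hG.card_adjAt_eq_two hw (mem_filter.1 hx).1 (mem_filter.1 hx).2) ha hb hab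
  · exact adjAt_erase h.1 h.2.1 h.2.2
  · refine ⟨mem_filter.2 ⟨h.1, h.2.2.1⟩, mem_filter.2 ⟨h.2.1, h.2.2.2.1⟩, ?_⟩
    rintro rfl
    have := h.2.2.2.2
    rw [inter_self, hG.card3 x h.1] at this
    omega

end Surfaces

section Circles

variable {Z : Complex} {a b w : ℕ}

lemma IsCircle.ne_of_mem (hZ : IsCircle Z) (hab : {a, b} ∈ Z) (hw : w ∉ Z.biUnion id) :
    a ≠ b ∧ w ≠ a ∧ w ≠ b := by
  refine ⟨fun h => ?_, fun h => hw (mem_biUnion.2 ⟨_, hab, by simp [h]⟩),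
    fun h => hw (mem_biUnion.2 ⟨_, hab, by simp [h]⟩)⟩
  have := hZ.2.1 _ hab
  simp [h] at this

lemma IsCircle.card_filter_subdivide_left (hZ : IsCircle Z) (hab : {a, b} ∈ Z)
    (hw : w ∉ Z.biUnion id) :
    #((insert {a, w} (insert {b, w} (Z.erase {a, b}))).filter (a ∈ ·)) = 2 := by
  obtain ⟨hab', hwa, hwb⟩ := hZ.ne_of_mem hab hw
  have haw : {a, w} ∉ (Z.filter (a ∈ ·)).erase {a, b} :=
    fun h => hw (mem_biUnion.2 ⟨_, (mem_filter.1 (mem_of_mem_erase h)).1, by simp⟩)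
  rw [filter_insert, filter_insert, filter_erase, if_pos (by simp),
    if_neg (by simp [hab', hwa.symm]),
    card_insert_of_notMem haw, card_erase_of_mem (mem_filter.2 ⟨hab, by simp⟩),
    hZ.2.2.1 a (mem_biUnion.2 ⟨_, hab, by simp⟩)]

lemma IsCircle.card_filter_subdivide (hZ : IsCircle Z) (hab : {a, b} ∈ Z)
    (hw : w ∉ Z.biUnion id) {v : ℕ}
    (hv : v ∈ (insert {a, w} (insert {b, w} (Z.erase {a, b}))).biUnion id) :
    #((insert {a, w} (insert {b, w} (Z.erase {a, b}))).filter (v ∈ ·)) = 2 := by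
  obtain ⟨hab', hwa, hwb⟩ := hZ.ne_of_mem hab hw
  by_cases hva : v = a
  · rw [hva]
    exact hZ.card_filter_subdivide_left hab hw
  by_cases hvb : v = b
  · rw [hvb, insert_comm, pair_comm a b]
    exact hZ.card_filter_subdivide_left (pair_comm a b ▸ hab) hw
  have hZw : Z.filter (w ∈ ·) = ∅ :=
    filter_eq_empty_iff.2 fun g hg hwg => hw (mem_biUnion.2 ⟨g, hg, hwg⟩)
  by_cases hvw : v = w
  · rw [hvw, filter_insert, filter_insert, filter_erase, hZw, if_pos (by simp),
      if_pos (by simp)]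
    refine card_pair fun h => ?_
    have : a ∈ ({b, w} : Finset ℕ) := h ▸ by simp
    simp [hab', hwa.symm] at this
  rw [filter_insert, filter_insert, filter_erase, if_neg (by simp [hva, hvw]),
    if_neg (by simp [hvb, hvw]), erase_eq_of_notMem (by simp [hva, hvb])]
  obtain ⟨g, hg, hvg⟩ := mem_biUnion.1 hv
  simp only [mem_insert, mem_erase] at hg
  rcases hg with rfl | rfl | ⟨-, hg⟩
  · simp [hva, hvw] at hvg
  · simp [hvb, hvw] at hvg
  · exact hZ.2.2.1 v (mem_biUnion.2 ⟨g, hg, hvg⟩)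

lemma IsCircle.reflTransGen_subdivide (hZ : IsCircle Z) (hab : {a, b} ∈ Z) {x : Finset ℕ}
    (hx : x ∈ insert {a, w} (insert {b, w} (Z.erase {a, b}))) :
    ReflTransGen (edgeAdj (insert {a, w} (insert {b, w} (Z.erase {a, b})))) x {a, w} := by
  set Z' := insert {a, w} (insert {b, w} (Z.erase {a, b}))
  have haw : {a, w} ∈ Z' := mem_insert_self _ _
  have hbw : {b, w} ∈ Z' := mem_insert_of_mem (mem_insert_self _ _)
  have hold : ∀ {g}, g ≠ {a, b} → g ∈ Z → g ∈ Z' :=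
    fun hg hgZ => mem_insert_of_mem (mem_insert_of_mem (mem_erase.2 ⟨hg, hgZ⟩))
  have hnear : ∀ g ∈ Z', (g ∩ {a, b}).Nonempty → ReflTransGen (edgeAdj Z') g {a, w} := by
    rintro g hg ⟨v, hv⟩
    rw [mem_inter, mem_insert, mem_singleton] at hv
    rcases hv with ⟨hvg, rfl | rfl⟩
    · exact .single ⟨hg, haw, v, by simp [hvg]⟩
    · exact .tail (.single ⟨hg, hbw, v, by simp [hvg]⟩) ⟨hbw, haw, w, by simp⟩
  obtain ⟨fa, hfaZ, hafa, hfa, -⟩ := exists_other_of_card_filter_eq_two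
    (hZ.2.2.1 a (mem_biUnion.2 ⟨_, hab, by simp⟩)) hab (by simp : a ∈ ({a, b} : Finset ℕ))
  simp only [Z', mem_insert, mem_erase] at hx
  rcases hx with rfl | rfl | ⟨hxe, hxZ⟩
  · exact .refl
  · exact hnear _ hbw ⟨b, by simp⟩
  have hpath : ReflTransGen (edgeAdj Z') x fa := by
    refine reflTransGen_of_bypass {a, b} (fun u v h hu hv => ⟨hold hu h.1, hold hv h.2.1, h.2.2⟩)
      (fun u v hu hv hu' hv' => (hnear u (hold hu' hu.1) hu.2.2).trans
        (symm (hnear v (hold hv' hv.2.1) (inter_comm v _ ▸ hv.2.2))))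
      ((hZ.2.2.2 x hxZ _ hab).tail ⟨hab, hfaZ, a, by simp [hafa]⟩) hxe hfa
  exact hpath.tail ⟨hold hfa hfaZ, haw, a, by simp [hafa]⟩

lemma IsCircle.subdivide (hZ : IsCircle Z) (hab : {a, b} ∈ Z) (hw : w ∉ Z.biUnion id) :
    IsCircle (insert {a, w} (insert {b, w} (Z.erase {a, b}))) := by
  obtain ⟨-, hwa, hwb⟩ := hZ.ne_of_mem hab hw
  refine ⟨insert_nonempty _ _, fun g hg => ?_, fun v hv => hZ.card_filter_subdivide hab hw hv,
    fun e₁ he₁ e₂ he₂ => (hZ.reflTransGen_subdivide hab he₁).trans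
      (symm (hZ.reflTransGen_subdivide hab he₂))⟩
  simp only [mem_insert, mem_erase] at hg
  rcases hg with rfl | rfl | ⟨-, hg⟩
  exacts [card_pair hwa.symm, card_pair hwb.symm, hZ.2.1 g hg]

end Circles

/-- Data for moving the triangle `{a, b, w}` of `G` across the edge `{a, b}` into the disc `C`,
where `t'` is the other triangle on `{a, b}`. -/
structure Transfer (K G C : Complex) (t' : Finset ℕ) (a b w : ℕ) : Prop where
  closed : IsClosedSurface K
  surfG : IsSurface G
  subG : G ⊆ K
  subC : C ⊆ K
  discC : IsDisc C
  disjGC : Disjoint G C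
  interGC : CircleInter G C
  htG : {a, b, w} ∈ G
  ht'C : t' ∈ C
  he : {a, b} ∈ bdryEdges G
  hab : a ≠ b
  hwa : w ≠ a
  hwb : w ≠ b
  het' : {a, b} ⊆ t'
  hw : w ∉ bdryVertices G

namespace Transfer

variable {K G C B : Complex} {t' : Finset ℕ} {a b w : ℕ} (S : Transfer K G C t' a b w)
include S

lemma card_triangle : #({a, b, w} : Finset ℕ) = 3 := S.surfG.card3 _ S.htG

lemma triangle_notMem : ({a, b, w} : Finset ℕ) ∉ C := disjoint_left.1 S.disjGC S.htG

lemma t'_ne_triangle : t' ≠ {a, b, w} := fun h => S.triangle_notMem (h ▸ S.ht'C)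

lemma eq_of_subset : ∀ s ∈ K, {a, b} ⊆ s → s = {a, b, w} ∨ s = t' := by
  obtain ⟨t₂, -, -, -, huniq⟩ := S.closed.exists_other_triangle (S.subG S.htG)
    (by simp [insert_subset_iff]) (card_pair S.hab)
  have ht₂ : t₂ = t' := ((huniq t' (S.subC S.ht'C) S.het').resolve_left S.t'_ne_triangle).symm
  exact ht₂ ▸ huniq

lemma w_notMem_vertices (hBK : B ⊆ K) (hGB : Disjoint G B) (hint : CircleInter G B) :
    w ∉ vertices B :=
  notMem_vertices_of_notMem_bdryVertices S.closed S.subG hBK hGB hint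
    (mem_vertices.2 ⟨_, S.htG, by simp⟩) S.hw

lemma w_notMem_vertices_C : w ∉ vertices C := S.w_notMem_vertices S.subC S.disjGC S.interGC

lemma exists_other {r : ℕ} (hr : r = a ∨ r = b) :
    ∃ s ∈ G, {r, w} ⊆ s ∧ s ≠ {a, b, w} ∧ ∀ u ∈ G, {r, w} ⊆ u → u = {a, b, w} ∨ u = s := by
  have hsub : {r, w} ⊆ ({a, b, w} : Finset ℕ) := by rcases hr with rfl | rfl <;> simp
  have hrw : r ≠ w := by rcases hr with rfl | rfl <;> simp [S.hwa.symm, S.hwb.symm]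
  have hf : {r, w} ∈ edges G := mem_edges.2 ⟨_, S.htG, hsub, card_pair hrw⟩
  exact exists_other_of_card_filter_eq_two (S.surfG.card_filter_eq_two_of_mem S.hw hf (by simp))
    S.htG hsub

lemma vertices_erase : vertices (G.erase {a, b, w}) = vertices G := by
  refine (vertices_mono (erase_subset _ _)).antisymm fun v hv => ?_
  obtain ⟨s, hsG, hvs⟩ := mem_vertices.1 hv
  by_cases hst : s = {a, b, w}
  · obtain ⟨sa, hsaG, hsa, hsat, -⟩ := S.exists_other (.inl rfl)
    obtain ⟨sb, hsbG, hsb, hsbt, -⟩ := S.exists_other (.inr rfl)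
    simp only [hst, mem_insert, mem_singleton] at hvs
    rcases hvs with rfl | rfl | rfl
    exacts [mem_vertices.2 ⟨sa, mem_erase.2 ⟨hsat, hsaG⟩, hsa (by simp)⟩,
      mem_vertices.2 ⟨sb, mem_erase.2 ⟨hsbt, hsbG⟩, hsb (by simp)⟩,
      mem_vertices.2 ⟨sa, mem_erase.2 ⟨hsat, hsaG⟩, hsa (by simp)⟩]
  · exact mem_vertices.2 ⟨s, mem_erase.2 ⟨hst, hsG⟩, hvs⟩

lemma edges_erase : edges (G.erase {a, b, w}) = (edges G).erase {a, b} := by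
  ext f
  simp only [mem_erase, mem_edges]
  constructor
  · rintro ⟨s, ⟨hst, hsG⟩, hfs, hfc⟩
    exact ⟨fun hf => hst (eq_of_mem_bdryEdges S.he hsG S.htG (hf ▸ hfs) (by simp)),
      s, hsG, hfs, hfc⟩
  · rintro ⟨hfe, s, hsG, hfs, hfc⟩
    by_cases hst : s = {a, b, w}
    · subst hst
      have hr : ∃ r, (r = a ∨ r = b) ∧ f = {r, w} := by
        rcases pair_subset_triple S.hab S.hwa S.hwb hfs hfc with h | h | h
        exacts [absurd h hfe, ⟨a, .inl rfl, h⟩, ⟨b, .inr rfl, h⟩]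
      obtain ⟨r, hr, rfl⟩ := hr
      obtain ⟨s', hs'G, hs', hs't, -⟩ := S.exists_other hr
      exact ⟨s', ⟨hs't, hs'G⟩, hs', hfc⟩
    · exact ⟨s, ⟨hst, hsG⟩, hfs, hfc⟩

/-- `sa` and `sb` are the triangles of `G` across the interior edges `{a, w}` and `{b, w}`. -/
lemma exists_neighbors : ∃ sa ∈ G.erase {a, b, w}, ∃ sb ∈ G.erase {a, b, w},
    ReflTransGen (adjAt (G.erase {a, b, w}) w) sa sb ∧
    ∀ x ∈ G, x ≠ {a, b, w} → #({a, b, w} ∩ x) = 2 →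
      ({a, b, w} ∩ x = {a, w} ∧ x = sa) ∨ ({a, b, w} ∩ x = {b, w} ∧ x = sb) := by
  obtain ⟨sa, hsaG, hsa, hsat, hsau⟩ := S.exists_other (.inl rfl)
  obtain ⟨sb, hsbG, hsb, hsbt, hsbu⟩ := S.exists_other (.inr rfl)
  have hadj : ∀ {s r}, s ∈ G → {r, w} ⊆ s → s ≠ {a, b, w} → (r = a ∨ r = b) →
      adjAt G w {a, b, w} s := fun hsG hs hst hr =>
    (adjAt_triple_iff S.surfG.card3 S.hab S.hwa S.hwb S.htG).2
      ⟨hsG, hst, by rcases hr with rfl | rfl <;> simp [hs]⟩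
  have hne : sa ≠ sb := by
    rintro rfl
    refine hsat (eq_triple_of_subset (S.surfG.card3 _ hsaG) S.hab S.hwa S.hwb ?_)
    simp only [insert_subset_iff, singleton_subset_iff] at hsa hsb ⊢
    exact ⟨hsa.1, hsb.1, hsa.2⟩
  refine ⟨sa, mem_erase.2 ⟨hsat, hsaG⟩, sb, mem_erase.2 ⟨hsbt, hsbG⟩,
    S.surfG.reflTransGen_adjAt_erase S.hw (hadj hsaG hsa hsat (.inl rfl))
      (hadj hsbG hsb hsbt (.inr rfl)) hne, fun x hxG hxt hcard => ?_⟩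
  rcases pair_subset_triple S.hab S.hwa S.hwb inter_subset_left hcard with h | h | h
  · exact absurd (eq_of_mem_bdryEdges S.he hxG S.htG (h ▸ inter_subset_right) (by simp)) hxt
  · exact .inl ⟨h, (hsau x hxG (h ▸ inter_subset_right)).resolve_left hxt⟩
  · exact .inr ⟨h, (hsbu x hxG (h ▸ inter_subset_right)).resolve_left hxt⟩

lemma isSurface_erase : IsSurface (G.erase {a, b, w}) := by
  obtain ⟨sa, hsa, sb, hsb, hlink, hnb⟩ := S.exists_neighbors
  have hw : ∀ {v}, v ∈ ({a, w} : Finset ℕ) → v ∈ ({b, w} : Finset ℕ) → v = w := by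
    simp only [mem_insert, mem_singleton]
    have := S.hab
    omega
  refine ⟨⟨sa, hsa⟩, fun s hs => S.surfG.card3 s (mem_of_mem_erase hs),
    fun f hf => (card_le_card (filter_subset_filter _ (erase_subset _ _))).trans
      (S.surfG.edge_le f (edges_mono (erase_subset _ _) hf)), ?_, ?_⟩
  · intro v t₁ ht₁ t₂ ht₂ hv₁ hv₂
    refine reflTransGen_of_bypass _ (fun x y h hx hy => adjAt_erase h hx hy)
      (fun x y hx hy hxt hyt => ?_) (S.surfG.link_conn v t₁ (mem_of_mem_erase ht₁) t₂
        (mem_of_mem_erase ht₂) hv₁ hv₂) (ne_of_mem_erase ht₁) (ne_of_mem_erase ht₂)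
    -- distinct neighbours of `{a, b, w}` share only the vertex `w`, around which `hlink` runs
    have hvx : v ∈ {a, b, w} ∩ x := mem_inter.2 ⟨hx.2.2.2.1, hx.2.2.1⟩
    have hvy : v ∈ {a, b, w} ∩ y := mem_inter.2 ⟨hy.2.2.1, hy.2.2.2.1⟩
    rcases hnb x hx.1 hxt (inter_comm x _ ▸ hx.2.2.2.2) with ⟨hx', rfl⟩ | ⟨hx', rfl⟩ <;>
      rcases hnb y hy.2.1 hyt hy.2.2.2.2 with ⟨hy', rfl⟩ | ⟨hy', rfl⟩
    · exact .refl
    · obtain rfl := hw (hx' ▸ hvx) (hy' ▸ hvy)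
      exact hlink
    · obtain rfl := hw (hy' ▸ hvy) (hx' ▸ hvx)
      exact symm hlink
    · exact .refl
  · intro t₁ ht₁ t₂ ht₂
    refine reflTransGen_of_bypass _ (fun x y h hx hy => adj_erase h hx hy)
      (fun x y hx hy hxt hyt => ?_) (S.surfG.conn t₁ (mem_of_mem_erase ht₁) t₂
        (mem_of_mem_erase ht₂)) (ne_of_mem_erase ht₁) (ne_of_mem_erase ht₂)
    have hlink' := ReflTransGen.mono (fun _ _ => adj_of_adjAt) _ _ hlink
    rcases hnb x hx.1 hxt (inter_comm x _ ▸ hx.2.2) with ⟨-, rfl⟩ | ⟨-, rfl⟩ <;>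
      rcases hnb y hy.2.1 hyt hy.2.2 with ⟨-, rfl⟩ | ⟨-, rfl⟩
    exacts [.refl, hlink', symm hlink', .refl]

lemma edge_mem_edges_C : {a, b} ∈ edges C := mem_edges.2 ⟨t', S.ht'C, S.het', card_pair S.hab⟩

lemma pair_notMem_edges_C (r : ℕ) : {r, w} ∉ edges C :=
  fun h => S.w_notMem_vertices_C (mem_vertices_of_mem_edges h (by simp))

lemma eq_of_mem_edges_C {f : Finset ℕ} (hf : f ∈ edges C) (hft : f ⊆ {a, b, w}) : f = {a, b} := by
  obtain ⟨-, -, -, hfc⟩ := mem_edges.1 hf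
  rcases pair_subset_triple S.hab S.hwa S.hwb hft hfc with h | rfl | rfl
  exacts [h, absurd hf (S.pair_notMem_edges_C a), absurd hf (S.pair_notMem_edges_C b)]

lemma vertices_insert_triangle : vertices (insert {a, b, w} C) = insert w (vertices C) := by
  have hv : ∀ {v}, v ∈ ({a, b} : Finset ℕ) → v ∈ insert w (vertices C) :=
    fun hv => mem_insert_of_mem (mem_vertices_of_mem_edges S.edge_mem_edges_C hv)
  rw [vertices_insert, insert_union, insert_union, singleton_union,
    insert_eq_of_mem (hv (by simp)), insert_eq_of_mem (hv (by simp))]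

lemma edges_insert_triangle :
    edges (insert {a, b, w} C) = insert {a, w} (insert {b, w} (edges C)) := by
  rw [edges_insert, powersetCard_two_triple S.hab S.hwa S.hwb, insert_union, insert_union,
    singleton_union, insert_eq_of_mem (mem_insert_of_mem (mem_insert_of_mem S.edge_mem_edges_C))]

lemma filter_edge_C : C.filter ({a, b} ⊆ ·) = {t'} := by
  ext s
  simp only [mem_filter, mem_singleton]
  refine ⟨fun ⟨hsC, hes⟩ => ?_, fun h => h ▸ ⟨S.ht'C, S.het'⟩⟩
  exact (S.eq_of_subset s (S.subC hsC) hes).resolve_left fun h => S.triangle_notMem (h ▸ hsC)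

lemma edge_mem_bdryEdges_C : {a, b} ∈ bdryEdges C :=
  mem_filter.2 ⟨S.edge_mem_edges_C, by rw [S.filter_edge_C, card_singleton]⟩

lemma filter_insert_pair (r : ℕ) (hr : r = a ∨ r = b) :
    (insert {a, b, w} C).filter ({r, w} ⊆ ·) = {{a, b, w}} := by
  rw [filter_insert, if_pos (by rcases hr with rfl | rfl <;> simp), filter_eq_empty_iff.2 ?_]
  · rfl
  exact fun s hs hrs => S.w_notMem_vertices_C (mem_vertices.2 ⟨s, hs, hrs (by simp)⟩)

lemma pair_mem_bdryEdges_insert : {a, w} ∈ bdryEdges (insert {a, b, w} C) :=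
  mem_filter.2 ⟨by simp [S.edges_insert_triangle], by rw [S.filter_insert_pair a (.inl rfl),
    card_singleton]⟩

lemma adjAt_triangle_t' {v : ℕ} (hv : v ∈ ({a, b} : Finset ℕ)) :
    adjAt (insert {a, b, w} C) v {a, b, w} t' :=
  ⟨mem_insert_self _ _, mem_insert_of_mem S.ht'C,
    (by simp [insert_subset_iff] : ({a, b} : Finset ℕ) ⊆ {a, b, w}) hv,
    S.het' hv, card_inter_eq_two S.card_triangle (S.discC.1.card3 t' S.ht'C)
      S.t'_ne_triangle.symm (by simp) S.het' (card_pair S.hab)⟩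

lemma isSurface_insert : IsSurface (insert {a, b, w} C) := by
  have hC := S.discC.1
  refine ⟨insert_nonempty _ _, forall_mem_insert _ _ _ |>.2 ⟨S.card_triangle, hC.card3⟩,
    fun f hf => ?_, fun v t₁ ht₁ t₂ ht₂ hv₁ hv₂ => ?_, fun t₁ ht₁ t₂ ht₂ => ?_⟩
  · rw [S.edges_insert_triangle, mem_insert, mem_insert] at hf
    rcases hf with rfl | rfl | hf
    · simp [S.filter_insert_pair a (.inl rfl)]
    · simp [S.filter_insert_pair b (.inr rfl)]
    rw [filter_insert]
    split_ifs with hft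
    · rw [S.eq_of_mem_edges_C hf hft, S.filter_edge_C]
      exact card_insert_le _ _
    · exact hC.edge_le f hf
  · have hub : ∀ s ∈ insert {a, b, w} C, v ∈ s → v ∈ ({a, b, w} : Finset ℕ) →
        ReflTransGen (adjAt (insert {a, b, w} C) v) {a, b, w} s := by
      intro s hs hvs hvt
      rcases mem_insert.1 hs with rfl | hsC
      · exact .refl
      have hv : v ∈ ({a, b} : Finset ℕ) := by
        have hvw : v ≠ w := fun h => S.w_notMem_vertices_C (h ▸ mem_vertices.2 ⟨s, hsC, hvs⟩)
        simp only [mem_insert, mem_singleton] at hvt ⊢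
        tauto
      exact .head (S.adjAt_triangle_t' hv) (ReflTransGen.mono
        (fun _ _ => adjAt_mono (subset_insert _ _)) _ _
        (hC.link_conn v t' S.ht'C s hsC (S.het' hv) hvs))
    by_cases hvt : v ∈ ({a, b, w} : Finset ℕ)
    · exact (symm (hub t₁ ht₁ hv₁ hvt)).trans (hub t₂ ht₂ hv₂ hvt)
    have hC₁ := (mem_insert.1 ht₁).resolve_left fun h => hvt (h ▸ hv₁)
    have hC₂ := (mem_insert.1 ht₂).resolve_left fun h => hvt (h ▸ hv₂)
    exact ReflTransGen.mono (fun _ _ => adjAt_mono (subset_insert _ _)) _ _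
      (hC.link_conn v t₁ hC₁ t₂ hC₂ hv₁ hv₂)
  · have hub : ∀ s ∈ insert {a, b, w} C, ReflTransGen (adj (insert {a, b, w} C)) {a, b, w} s := by
      intro s hs
      rcases mem_insert.1 hs with rfl | hsC
      · exact .refl
      exact .head (adj_of_adjAt (S.adjAt_triangle_t' (v := a) (by simp)))
        (ReflTransGen.mono (fun _ _ => adj_mono (subset_insert _ _)) _ _ (hC.conn t' S.ht'C s hsC))
    exact (symm (hub t₁ ht₁)).trans (hub t₂ ht₂)

lemma eulerChar_insert : eulerChar (insert {a, b, w} C) = eulerChar C := by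
  have haw : {a, w} ∉ insert {b, w} (edges C) := by
    rw [mem_insert, not_or]
    refine ⟨fun h => ?_, S.pair_notMem_edges_C a⟩
    have : a ∈ ({b, w} : Finset ℕ) := h ▸ by simp
    simp [S.hab, S.hwa.symm] at this
  simp only [eulerChar, S.vertices_insert_triangle, S.edges_insert_triangle,
    card_insert_of_notMem S.w_notMem_vertices_C, card_insert_of_notMem haw,
    card_insert_of_notMem (S.pair_notMem_edges_C b), card_insert_of_notMem S.triangle_notMem]
  push_cast
  ring

lemma isDisc_insert : IsDisc (insert {a, b, w} C) :=
  ⟨S.isSurface_insert, S.eulerChar_insert ▸ S.discC.2.1, ⟨_, S.pair_mem_bdryEdges_insert⟩⟩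

lemma intVertices_subset : intVertices C ⊆ intVertices (insert {a, b, w} C) := by
  intro v hv
  obtain ⟨hvC, hvb⟩ := mem_sdiff.1 hv
  have hvw : v ≠ w := fun h => S.w_notMem_vertices_C (h ▸ hvC)
  refine mem_sdiff.2 ⟨S.vertices_insert_triangle ▸ mem_insert_of_mem hvC, fun h => ?_⟩
  obtain ⟨f, hf, hvf⟩ := mem_bdryVertices.1 h
  obtain ⟨hfE, hf1⟩ := mem_filter.1 hf
  rw [S.edges_insert_triangle, mem_insert, mem_insert] at hfE
  rcases hfE with rfl | rfl | hfE
  · simp only [mem_insert, mem_singleton, hvw, or_false] at hvf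
    exact hvb (mem_bdryVertices.2 ⟨_, S.edge_mem_bdryEdges_C, by simp [hvf]⟩)
  · simp only [mem_insert, mem_singleton, hvw, or_false] at hvf
    exact hvb (mem_bdryVertices.2 ⟨_, S.edge_mem_bdryEdges_C, by simp [hvf]⟩)
  refine hvb (mem_bdryVertices.2 ⟨f, mem_filter.2 ⟨hfE, le_antisymm ?_ ?_⟩, hvf⟩)
  · exact hf1 ▸ card_le_card (filter_subset_filter _ (subset_insert _ _))
  · obtain ⟨s, hs, hfs, -⟩ := mem_edges.1 hfE
    exact card_pos.2 ⟨s, mem_filter.2 ⟨hs, hfs⟩⟩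

lemma edge_mem_inter : {a, b} ∈ edges G ∩ edges C :=
  mem_inter.2 ⟨mem_edges.2 ⟨_, S.htG, by simp [insert_subset_iff], card_pair S.hab⟩,
    S.edge_mem_edges_C⟩

lemma inter_edges_erase_insert : edges (G.erase {a, b, w}) ∩ edges (insert {a, b, w} C) =
    insert {a, w} (insert {b, w} ((edges G ∩ edges C).erase {a, b})) := by
  have hG : ∀ r, r = a ∨ r = b → {r, w} ∈ edges G ∧ ({r, w} : Finset ℕ) ≠ {a, b} := by
    rintro r hr
    refine ⟨mem_edges.2 ⟨_, S.htG, by rcases hr with rfl | rfl <;> simp, ?_⟩,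
      fun h => S.pair_notMem_edges_C r (h ▸ S.edge_mem_edges_C)⟩
    exact card_pair (by rcases hr with rfl | rfl; exacts [S.hwa.symm, S.hwb.symm])
  obtain ⟨haw, hawe⟩ := hG a (.inl rfl)
  obtain ⟨hbw, hbwe⟩ := hG b (.inr rfl)
  rw [S.edges_erase, S.edges_insert_triangle]
  ext f
  simp only [mem_inter, mem_erase, mem_insert]
  constructor
  · rintro ⟨⟨hfe, hfG⟩, rfl | rfl | hfC⟩
    exacts [.inl rfl, .inr (.inl rfl), .inr (.inr ⟨hfe, hfG, hfC⟩)]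
  · rintro (rfl | rfl | ⟨hfe, hfG, hfC⟩)
    exacts [⟨⟨hawe, haw⟩, .inl rfl⟩, ⟨⟨hbwe, hbw⟩, .inr (.inl rfl)⟩, ⟨⟨hfe, hfG⟩, .inr (.inr hfC)⟩]

lemma circleInter_erase_insert : CircleInter (G.erase {a, b, w}) (insert {a, b, w} C) := by
  have hZ : IsCircle (edges G ∩ edges C) :=
    S.interGC.1.resolve_right fun h => by simpa [h] using S.edge_mem_inter
  have hw : w ∉ (edges G ∩ edges C).biUnion id := fun h => by
    obtain ⟨f, hf, hwf⟩ := mem_biUnion.1 h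
    exact S.w_notMem_vertices_C (mem_vertices_of_mem_edges (mem_inter.1 hf).2 hwf)
  rw [CircleInter, S.inter_edges_erase_insert]
  refine ⟨.inl (hZ.subdivide S.edge_mem_inter hw), ?_⟩
  have hwG : w ∈ vertices G := mem_vertices.2 ⟨_, S.htG, by simp⟩
  rw [S.vertices_erase, S.vertices_insert_triangle, inter_insert_of_mem hwG, S.interGC.2]
  conv_lhs => rw [← insert_erase S.edge_mem_inter]
  ext v
  simp only [biUnion_insert, id, mem_insert, mem_union, mem_singleton]
  tauto

lemma circleInter_erase (hBK : B ⊆ K) (hGB : Disjoint G B) (hCB : Disjoint C B)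
    (h : CircleInter G B) : CircleInter (G.erase {a, b, w}) B := by
  have he : {a, b} ∉ edges B := fun he => by
    obtain ⟨s, hsB, hes, -⟩ := mem_edges.1 he
    rcases S.eq_of_subset s (hBK hsB) hes with rfl | rfl
    exacts [disjoint_left.1 hGB S.htG hsB, disjoint_left.1 hCB S.ht'C hsB]
  refine circleInter_congr h ?_ (by rw [S.vertices_erase])
  rw [S.edges_erase, erase_inter, erase_eq_of_notMem fun h' => he (mem_inter.1 h').2]

lemma circleInter_insert (hw : w ∉ vertices B)
    (h : CircleInter C B) : CircleInter (insert {a, b, w} C) B := by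
  have hpair : ∀ r, {r, w} ∉ edges B := fun r h => hw (mem_vertices_of_mem_edges h (by simp))
  refine circleInter_congr h ?_ ?_
  · rw [S.edges_insert_triangle, insert_inter_of_notMem (hpair a), insert_inter_of_notMem (hpair b)]
  · rw [S.vertices_insert_triangle, insert_inter_of_notMem hw]

end Transfer

lemma pairwise_insert_erase {α : Type*} [DecidableEq α] {s : Finset α} {x y : α}
    {P : α → α → Prop} (hP : ∀ u v, P u v → P v u) (hy : ∀ z ∈ s, z ≠ x → P y z)
    (hs : ∀ u ∈ s, ∀ v ∈ s, u ≠ v → P u v) :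
    ∀ u ∈ insert y (s.erase x), ∀ v ∈ insert y (s.erase x), u ≠ v → P u v := by
  simp only [mem_insert, mem_erase]
  rintro u (rfl | ⟨hux, hu⟩) v (rfl | ⟨hvx, hv⟩) huv
  exacts [absurd rfl huv, hy v hv hvx, hP _ _ (hy u hu hux), hs u hu v hv huv]

namespace IsDecomp

variable {K G D : Complex} {Ds : Finset Complex} {t' : Finset ℕ} {a b w : ℕ}

lemma mem_D_or_mem_Ds (hdec : IsDecomp K G D Ds) {s : Finset ℕ} (hs : s ∈ K) (hsG : s ∉ G) :
    s ∈ D ∨ ∃ Di ∈ Ds, s ∈ Di := by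
  rw [← hdec.cover, mem_union, mem_union, mem_sup] at hs
  tauto

lemma transfer_to_D (hdec : IsDecomp K G D Ds) (S : Transfer K G D t' a b w) :
    IsDecomp K (G.erase {a, b, w}) (insert {a, b, w} D) Ds where
  closed := hdec.closed
  subG := (erase_subset _ _).trans hdec.subG
  subD := insert_subset (hdec.subG S.htG) hdec.subD
  subDs := hdec.subDs
  surfG := S.isSurface_erase
  discD := S.isDisc_insert
  discDs := hdec.discDs
  maxv := let ⟨v, hv, hval⟩ := hdec.maxv; ⟨v, S.intVertices_subset hv, hval⟩
  cover := by rw [union_insert, ← insert_union, insert_erase S.htG, hdec.cover]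
  disjGD := disjoint_insert_right.2 ⟨notMem_erase _ _, hdec.disjGD.mono_left (erase_subset _ _)⟩
  disjGDs Di hDi := (hdec.disjGDs Di hDi).mono_left (erase_subset _ _)
  disjDDs Di hDi :=
    disjoint_insert_left.2 ⟨disjoint_left.1 (hdec.disjGDs Di hDi) S.htG, hdec.disjDDs Di hDi⟩
  disjDsDs := hdec.disjDsDs
  interGD := S.circleInter_erase_insert
  interGDs Di hDi := S.circleInter_erase (hdec.subDs Di hDi) (hdec.disjGDs Di hDi)
    (hdec.disjDDs Di hDi) (hdec.interGDs Di hDi)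
  interDDs Di hDi := S.circleInter_insert
    (S.w_notMem_vertices (hdec.subDs Di hDi) (hdec.disjGDs Di hDi) (hdec.interGDs Di hDi))
    (hdec.interDDs Di hDi)
  interDsDs := hdec.interDsDs

lemma transfer_to_Ds (hdec : IsDecomp K G D Ds) {Di : Complex} (hDi : Di ∈ Ds)
    (S : Transfer K G Di t' a b w) :
    IsDecomp K (G.erase {a, b, w}) D (insert (insert {a, b, w} Di) (Ds.erase Di)) where
  closed := hdec.closed
  subG := (erase_subset _ _).trans hdec.subG
  subD := hdec.subD
  subDs := forall_mem_insert _ _ _ |>.2 ⟨insert_subset (hdec.subG S.htG) (hdec.subDs Di hDi),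
    fun Dj hDj => hdec.subDs Dj (mem_of_mem_erase hDj)⟩
  surfG := S.isSurface_erase
  discD := hdec.discD
  discDs := forall_mem_insert _ _ _ |>.2 ⟨S.isDisc_insert,
    fun Dj hDj => hdec.discDs Dj (mem_of_mem_erase hDj)⟩
  maxv := hdec.maxv
  cover := by
    rw [← hdec.cover]
    conv_rhs => rw [← insert_erase hDi]
    ext s
    by_cases hs : s = {a, b, w}
    · simp [hs, S.htG]
    · simp only [sup_insert, id, sup_eq_union, mem_union, mem_erase, mem_insert, hs]
      tauto
  disjGD := hdec.disjGD.mono_left (erase_subset _ _)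
  disjGDs := forall_mem_insert _ _ _ |>.2 ⟨disjoint_insert_right.2 ⟨notMem_erase _ _,
      (hdec.disjGDs Di hDi).mono_left (erase_subset _ _)⟩,
    fun Dj hDj => (hdec.disjGDs Dj (mem_of_mem_erase hDj)).mono_left (erase_subset _ _)⟩
  disjDDs := forall_mem_insert _ _ _ |>.2 ⟨disjoint_insert_right.2
      ⟨disjoint_left.1 hdec.disjGD S.htG, hdec.disjDDs Di hDi⟩,
    fun Dj hDj => hdec.disjDDs Dj (mem_of_mem_erase hDj)⟩
  disjDsDs := pairwise_insert_erase (fun _ _ h => h.symm)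
    (fun Dk hDk hne => disjoint_insert_left.2 ⟨disjoint_left.1 (hdec.disjGDs Dk hDk) S.htG,
      hdec.disjDsDs Di hDi Dk hDk (Ne.symm hne)⟩) hdec.disjDsDs
  interGD := S.circleInter_erase hdec.subD hdec.disjGD (hdec.disjDDs Di hDi).symm hdec.interGD
  interGDs := forall_mem_insert _ _ _ |>.2 ⟨S.circleInter_erase_insert, fun Dj hDj =>
    S.circleInter_erase (hdec.subDs Dj (mem_of_mem_erase hDj))
      (hdec.disjGDs Dj (mem_of_mem_erase hDj))
      (hdec.disjDsDs Di hDi Dj (mem_of_mem_erase hDj) (ne_of_mem_erase hDj).symm)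
      (hdec.interGDs Dj (mem_of_mem_erase hDj))⟩
  interDDs := forall_mem_insert _ _ _ |>.2 ⟨circleInter_comm.1 <| S.circleInter_insert
      (S.w_notMem_vertices hdec.subD hdec.disjGD hdec.interGD)
      (circleInter_comm.1 (hdec.interDDs Di hDi)),
    fun Dj hDj => hdec.interDDs Dj (mem_of_mem_erase hDj)⟩
  interDsDs := pairwise_insert_erase (fun _ _ => circleInter_comm.1)
    (fun Dk hDk hne => S.circleInter_insert
      (S.w_notMem_vertices (hdec.subDs Dk hDk) (hdec.disjGDs Dk hDk) (hdec.interGDs Dk hDk))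
      (hdec.interDsDs Di hDi Dk hDk (Ne.symm hne))) hdec.interDsDs

end IsDecomp

/-- in a minimal decomposition, the link of every boundary edge
of the genus-surface lies in the boundary of the genus-surface. -/
theorem link_of_boundary_edge_in_boundary (K G D : Complex)
    (Ds : Finset Complex) (h : IsMinDecomp K G D Ds)
    (e : Finset ℕ) (he : e ∈ bdryEdges G) :
    ∀ t ∈ G, e ⊆ t → ∀ w ∈ t, w ∉ e → w ∈ bdryVertices G := by
  intro t ht het w hwt hwe
  by_contra hw
  obtain ⟨hdec, hmin⟩ := h
  obtain ⟨-, -, -, he2⟩ := mem_edges.1 (mem_filter.1 he).1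
  obtain ⟨a, b, hab, rfl⟩ := card_eq_two.1 he2
  have hwa : w ≠ a := by rintro rfl; simp at hwe
  have hwb : w ≠ b := by rintro rfl; simp at hwe
  obtain rfl : t = {a, b, w} := eq_triple_of_subset (hdec.surfG.card3 t ht) hab hwa hwb
    (insert_subset_iff.2 ⟨het (by simp), insert_subset_iff.2 ⟨het (by simp), by simpa⟩⟩)
  obtain ⟨t', ht'K, het', ht't, -⟩ :=
    hdec.closed.exists_other_triangle (hdec.subG ht) het (card_pair hab)
  have ht'G : t' ∉ G := fun h => ht't (eq_of_mem_bdryEdges he h ht het' het)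
  have transfer {C : Complex} (hCK : C ⊆ K) (hC : IsDisc C) (hGC : Disjoint G C)
      (hint : CircleInter G C) (ht'C : t' ∈ C) : Transfer K G C t' a b w :=
    ⟨hdec.closed, hdec.surfG, hdec.subG, hCK, hC, hGC, hint, ht, ht'C, he, hab, hwa, hwb, het', hw⟩
  have hlt := card_erase_lt_of_mem ht
  rcases hdec.mem_D_or_mem_Ds ht'K ht'G with ht'D | ⟨Di, hDi, ht'Di⟩
  · exact (hmin _ _ _ (hdec.transfer_to_D (transfer hdec.subD hdec.discD hdec.disjGD
      hdec.interGD ht'D))).not_gt hlt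
  · exact (hmin _ _ _ (hdec.transfer_to_Ds hDi (transfer (hdec.subDs Di hDi) (hdec.discDs Di hDi)
      (hdec.disjGDs Di hDi) (hdec.interGDs Di hDi) ht'Di))).not_gt hlt

end Tri
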